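/- Let W̃ be an extended affine Weyl group with Bruhat order, μ a dominant coweight, and Adm(μ) the lower poset generated by the translation elements t_{λ} for λ in the W₀-orbit of μ. Suppose x ∈ Adm(μ) has length ℓ(t_μ) - 1 (codimension 1). Then there are at most two distinct λ ∈ W₀·μ with x ≤ t_λ. -/

import Mathlib

/-!
If `x ≤ t_λ` has codimension one then `x = s * t_λ` for an affine reflection `s`, so
`v ↦ x v` is `v ↦ s (v + λ)`. Comparing two such descriptions of the same `x`, the linear parts
force the two reflections to have parallel mirrors, and then `λ' - λ` is a multiple of the
common normal. Hence all such `λ` lie on one line, which meets the sphere `‖λ‖ = r` in at most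
two points.
-/

open scoped RealInnerProductSpace

/-- An affine reflection of a Euclidean space with unit normal `u` and constant `c`. -/
def IsAffineReflectionWith {V : Type*} [NormedAddCommGroup V] [InnerProductSpace ℝ V]
    (s : V → V) (u : V) (c : ℝ) : Prop :=
  ‖u‖ = 1 ∧ ∀ x, s x = x - (2 * (⟪x, u⟫ - c)) • u

theorem EuclideanGeometry.Sphere.eq_or_eq_or_eq_of_mem_of_mem_mk'_span_singleton
    {V P : Type*} [NormedAddCommGroup V] [InnerProductSpace ℝ V] [MetricSpace P]
    [NormedAddTorsor V P] {s : Sphere P} {a b c : P} {v : V}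
    (ha : a ∈ s) (hb : b ∈ s) (hc : c ∈ s)
    (hb' : b ∈ AffineSubspace.mk' a (ℝ ∙ v)) (hc' : c ∈ AffineSubspace.mk' a (ℝ ∙ v)) :
    a = b ∨ a = c ∨ b = c := by
  obtain rfl | hb := (s.eq_or_eq_secondInter_of_mem_mk'_span_singleton_iff_mem ha hb').2 hb
  · exact .inl rfl
  obtain rfl | hc := (s.eq_or_eq_secondInter_of_mem_mk'_span_singleton_iff_mem ha hc').2 hc
  · exact .inr (.inl rfl)
  exact .inr (.inr (hb.trans hc.symm))

theorem IsAffineReflectionWith.sub_mem_span_singleton_of_comp_add_eq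
    {V : Type*} [NormedAddCommGroup V] [InnerProductSpace ℝ V]
    {s₁ s₂ : V → V} {u₁ u₂ a b : V} {c₁ c₂ : ℝ}
    (hs₁ : IsAffineReflectionWith s₁ u₁ c₁) (hs₂ : IsAffineReflectionWith s₂ u₂ c₂)
    (h : ∀ v, s₁ (v + a) = s₂ (v + b)) :
    b - a ∈ ℝ ∙ u₁ := by
  obtain ⟨hu₁, hs₁⟩ := hs₁
  obtain ⟨hu₂, hs₂⟩ := hs₂
  have h₀ := h 0
  simp only [zero_add, hs₁, hs₂] at h₀
  have hlin : ∀ v, ⟪v, u₁⟫ • u₁ = ⟪v, u₂⟫ • u₂ := by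
    intro v
    have hv := h v
    rw [hs₁, hs₂, inner_add_left, inner_add_left] at hv
    linear_combination (norm := module) (1 / 2 : ℝ) • (h₀ - hv)
  have hu₂ : u₂ = ⟪u₂, u₁⟫ • u₁ := by
    rw [hlin, real_inner_self_eq_norm_sq, hu₂, one_pow, one_smul]
  refine Submodule.mem_span_singleton.2
    ⟨2 * (⟪b, u₂⟫ - c₂) * ⟪u₂, u₁⟫ - 2 * (⟪a, u₁⟫ - c₁), ?_⟩
  rw [sub_smul, mul_smul, ← hu₂]
  linear_combination (norm := module) h₀

theorem admissible_codim_one_at_most_two_maximal_general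
    {V : Type*} [NormedAddCommGroup V] [InnerProductSpace ℝ V]
    {W : Type*} [Group W]
    (ρ : W →* Equiv.Perm V)
    (t : V → W) (ht : ∀ ν v, ρ (t ν) v = v + ν)
    (le : W → W → Prop) (len : W → ℕ)
    (hcov : ∀ x y : W, le x y → len x + 1 = len y →
      ∃ s : W, (∃ u c, IsAffineReflectionWith (ρ s) u c) ∧ x = s * y)
    (r : ℝ) (Λ : Set V) (hΛr : ∀ l ∈ Λ, ‖l‖ = r)
    (L : ℕ) (hL : ∀ l ∈ Λ, len (t l) = L)
    (x : W) (hx : len x + 1 = L) :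
    ∀ a ∈ Λ, ∀ b ∈ Λ, ∀ c ∈ Λ,
      le x (t a) → le x (t b) → le x (t c) → a = b ∨ a = c ∨ b = c := by
  have reflection_comp_translation : ∀ l ∈ Λ, le x (t l) → ∃ (s : V → V) (u : V) (cs : ℝ),
      IsAffineReflectionWith s u cs ∧ ∀ v, ρ x v = s (v + l) := by
    intro l hl hxl
    obtain ⟨s, ⟨u, cs, hs⟩, rfl⟩ := hcov x (t l) hxl (hL l hl ▸ hx)
    exact ⟨ρ s, u, cs, hs, fun v => by rw [map_mul, Equiv.Perm.coe_mul, Function.comp_apply, ht]⟩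
  intro a ha b hb c hc hxa hxb hxc
  obtain ⟨sa, u, ca, hsa, hxa⟩ := reflection_comp_translation a ha hxa
  have on_line : ∀ l ∈ Λ, le x (t l) → l ∈ AffineSubspace.mk' a (ℝ ∙ u) := by
    intro l hl hxl
    obtain ⟨sl, ul, cl, hsl, hxl⟩ := reflection_comp_translation l hl hxl
    exact (AffineSubspace.mem_mk' ..).2
      (hsa.sub_mem_span_singleton_of_comp_add_eq hsl fun v => by rw [← hxa, hxl])
  have on_sphere : ∀ l ∈ Λ, l ∈ EuclideanGeometry.Sphere.mk (0 : V) r := fun l hl => by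
    rw [EuclideanGeometry.mem_sphere, dist_zero_right, hΛr l hl]
  exact EuclideanGeometry.Sphere.eq_or_eq_or_eq_of_mem_of_mem_mk'_span_singleton
    (on_sphere a ha) (on_sphere b hb) (on_sphere c hc) (on_line b hb hxb) (on_line c hc hxc)

/-- Let `W̃` be an (extended affine Weyl) group acting faithfully by affine
transformations on the Euclidean space `V`, containing the translations `t ν`.  Let `le`
and `len` be the Bruhat order and length function, satisfying the covering property that
whenever `x ≤ y` with `len x + 1 = len y` there is an affine reflection `s` with
`x = s * y`.  Let `Λ ⊆ V` be the `W₀`-orbit of a dominant coweight `μ`, so all its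
elements lie on a sphere of radius `r > 0` and all translations `t l`, `l ∈ Λ`, have the
same length `L` (these are the maximal elements of `Adm(μ)`).  If `x` has codimension
one, i.e. `len x + 1 = L`, then there are at most two distinct `l ∈ Λ` with `x ≤ t l`. -/
theorem admissible_codim_one_at_most_two_maximal
    {V : Type*} [NormedAddCommGroup V] [InnerProductSpace ℝ V] [FiniteDimensional ℝ V]
    {W : Type*} [Group W]
    (ρ : W →* Equiv.Perm V) (hfaith : Function.Injective ρ)
    (t : V → W) (ht : ∀ ν v, ρ (t ν) v = v + ν)
    (le : W → W → Prop) (len : W → ℕ)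
    (hcov : ∀ x y : W, le x y → len x + 1 = len y →
      ∃ s : W, (∃ u c, IsAffineReflectionWith (ρ s) u c) ∧ x = s * y)
    (r : ℝ) (hr : 0 < r) (Λ : Set V) (hΛr : ∀ l ∈ Λ, ‖l‖ = r)
    (L : ℕ) (hL : ∀ l ∈ Λ, len (t l) = L)
    (x : W) (hx : len x + 1 = L) :
    ∀ a ∈ Λ, ∀ b ∈ Λ, ∀ c ∈ Λ,
      le x (t a) → le x (t b) → le x (t c) → a = b ∨ a = c ∨ b = c :=
  admissible_codim_one_at_most_two_maximal_general ρ t ht le len hcov r Λ hΛr L hL x hx
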